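/- Let P be a strictly positive distribution on {±1}ⁿ with log P(x) = Σ_{S ⊆ [n]} w_S x_S (the constant term w_∅ absorbing the normalization), where x_S := Π_{i∈S} x_i. For each i ∈ [n] let N(i) := ∪ { S \ {i} : i ∈ S, w_S ≠ 0 } be the Markov blanket of i, and let arctanh(E_P[X_i | X_{∼i} = x_{∼i}]) = Σ_{S : i ∈ S} w_S x_{S\{i}}. For each i let f̂_i : {±1}ⁿ → (−1,1) be a function depending only on the coordinates in a set N̂(i) ⊆ [n] \ {i}. For each nonempty S and i ∈ S define ŵ_{S,i} := E_{X ∼ Unif({±1}ⁿ)}[ arctanh(f̂_i(X)) · X_{S\{i}} ], and define ŵ_S := (1/|S|) Σ_{i ∈ S} ŵ_{S,i}. Then Σ_{S ≠ ∅} |w_S − ŵ_S| ≤ Σ_{i=1}^{n} 2^{|N(i) ∪ N̂(i)|/2 + 1} · √( E_{X' ∼ Unif({±1}ⁿ)}[ ( arctanh(f̂_i(X')) − arctanh(E_P[X_i | X_{∼i} = X'_{∼i}]) )² ] ). Consequently, if P̂ is the distribution on {±1}ⁿ proportional to exp(Σ_{S ≠ ∅} ŵ_S x_S), then SKL(P̂,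 P) ≤ 2 Σ_{S ≠ ∅} |w_S − ŵ_S|. -/

import Mathlib

open Finset Real
open scoped Classical

noncomputable section

/-- `arctanh x = (1/2) log((1+x)/(1-x))`, the inverse hyperbolic tangent. -/
def arctanh (x : ℝ) : ℝ := (1 / 2) * Real.log ((1 + x) / (1 - x))

/-- Map a boolean spin to `±1`. -/
def spin (b : Bool) : ℝ := if b then 1 else -1

/-- The monomial `x_S = ∏_{i ∈ S} x i` for `x ∈ {±1}ⁿ` encoded by booleans. -/
def chiMon {n : ℕ} (S : Finset (Fin n)) (x : Fin n → Bool) : ℝ := ∏ i ∈ S, spin (x i)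

/-- KL divergence between two distributions on `{±1}ⁿ`. -/
def klDiv {n : ℕ} (P Q : (Fin n → Bool) → ℝ) : ℝ :=
  ∑ x : Fin n → Bool, P x * Real.log (P x / Q x)

/-- The Markov blanket of node `i`: the union of `S \ {i}` over sets `S ∋ i` with
nonzero Fourier coefficient `w S` of `log P`. -/
def markovBlanket {n : ℕ} (w : Finset (Fin n) → ℝ) (i : Fin n) : Finset (Fin n) :=
  (Finset.univ.filter fun S : Finset (Fin n) => i ∈ S ∧ w S ≠ 0).biUnion fun S => S.erase i

/-- The conditional expectation `E_P[X_i | X_{∼i} = x_{∼i}]`. -/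
def condMean {n : ℕ} (P : (Fin n → Bool) → ℝ) (i : Fin n) (x : Fin n → Bool) : ℝ :=
  (P (Function.update x i true) - P (Function.update x i false)) /
    (P (Function.update x i true) + P (Function.update x i false))

/-- `ŵ_{S,i} = E_{X ∼ Unif}[arctanh (f̂_i X) · X_{S∖{i}}]`. -/
def wHatSi {n : ℕ} (fhat : Fin n → (Fin n → Bool) → ℝ) (S : Finset (Fin n))
    (i : Fin n) : ℝ :=
  (1 / 2 ^ n) * ∑ x : Fin n → Bool, arctanh (fhat i x) * chiMon (S.erase i) x

/-- `ŵ_S = (1/|S|) ∑_{i ∈ S} ŵ_{S,i}`. -/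
def wHat {n : ℕ} (fhat : Fin n → (Fin n → Bool) → ℝ) (S : Finset (Fin n)) : ℝ :=
  (1 / S.card) * ∑ i ∈ S, wHatSi fhat S i

/-- The distribution `P̂(x) ∝ exp (∑_{S ≠ ∅} ŵ_S x_S)`. -/
def pHat {n : ℕ} (fhat : Fin n → (Fin n → Bool) → ℝ) (x : Fin n → Bool) : ℝ :=
  Real.exp (∑ S ∈ Finset.univ.filter (fun S : Finset (Fin n) => S ≠ ∅),
      wHat fhat S * chiMon S x) /
    ∑ y : Fin n → Bool,
      Real.exp (∑ S ∈ Finset.univ.filter (fun S : Finset (Fin n) => S ≠ ∅),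
        wHat fhat S * chiMon S y)

/-! For `i ∈ S`, the coefficient `w_S` is the Walsh coefficient at `S ∖ {i}` of the local field
`arctanh E_P[X_i | X_{∼i}]`, and `ŵ_{S,i}` is the same coefficient of `arctanh ∘ f̂_i`. So the
errors `w_S - ŵ_{S,i}` are Walsh coefficients of the difference `h_i`, which depends only on the
coordinates in `N(i) ∪ N̂(i)`; only the `2 ^ |N(i) ∪ N̂(i)|` coefficients indexed by subsets of that
set can be nonzero, and Cauchy–Schwarz with Plancherel bounds their sum by
`2 ^ (|N(i) ∪ N̂(i)| / 2) ‖h_i‖₂`. Averaging over `i ∈ S` can only decrease the error.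

For the divergence, `SKL(P̂, P) = ∑ₓ (P̂ - P)(log P̂ - log P)`, where `log P̂ - log P` is a constant
plus `∑_{S ≠ ∅} (ŵ_S - w_S) x_S`; the constant integrates to zero against `P̂ - P` and each
character to at most `2` in absolute value. -/

section Fourier

variable {n : ℕ}

lemma spin_not (b : Bool) : spin (!b) = -spin b := by cases b <;> simp [spin]

lemma spin_mul_self (b : Bool) : spin b * spin b = 1 := by cases b <;> simp [spin]

lemma abs_chiMon (S : Finset (Fin n)) (x : Fin n → Bool) : |chiMon S x| = 1 := by
  simp only [chiMon, abs_prod]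
  exact prod_eq_one fun i _ => by cases x i <;> simp [spin]

lemma chiMon_mul_self (S : Finset (Fin n)) (x : Fin n → Bool) : chiMon S x * chiMon S x = 1 := by
  rw [← abs_mul_abs_self, abs_chiMon, mul_one]

lemma chiMon_congr {S : Finset (Fin n)} {x y : Fin n → Bool} (h : ∀ k ∈ S, x k = y k) :
    chiMon S x = chiMon S y :=
  prod_congr rfl fun k hk => by rw [h k hk]

lemma chiMon_update_of_mem {S : Finset (Fin n)} {i : Fin n} (hi : i ∈ S) (x : Fin n → Bool)
    (b : Bool) : chiMon S (Function.update x i b) = spin b * chiMon (S.erase i) x := by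
  rw [chiMon, ← mul_prod_erase _ _ hi, Function.update_self]
  exact congrArg _ (chiMon_congr fun _ hk => Function.update_of_ne (ne_of_mem_erase hk) _ _)

lemma chiMon_update_of_notMem {S : Finset (Fin n)} {i : Fin n} (hi : i ∉ S) (x : Fin n → Bool)
    (b : Bool) : chiMon S (Function.update x i b) = chiMon S x :=
  chiMon_congr fun _ hk => Function.update_of_ne (ne_of_mem_of_not_mem hk hi) _ _

/-- Flipping a coordinate `j ∈ T \ A` negates `chiMon T` but leaves `h` unchanged, so the
terms of the sum cancel in pairs. -/
lemma sum_mul_chiMon_eq_zero {h : (Fin n → Bool) → ℝ} {A T : Finset (Fin n)}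
    (hA : ∀ x y, (∀ k ∈ A, x k = y k) → h x = h y) (hT : ¬T ⊆ A) :
    ∑ x, h x * chiMon T x = 0 := by
  obtain ⟨j, hjT, hjA⟩ := not_subset.mp hT
  have hchi (x : Fin n → Bool) : chiMon T (Function.update x j (!x j)) = -chiMon T x := by
    conv_rhs => rw [← Function.update_eq_self j x]
    rw [chiMon_update_of_mem hjT, chiMon_update_of_mem hjT, spin_not, neg_mul]
  refine sum_ninvolution (fun x => Function.update x j (!x j)) (fun x => ?_) (fun x _ => ?_)
    (fun _ => mem_univ _) (fun x => by simp)
  · have hflip : h (Function.update x j (!x j)) = h x :=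
      hA _ x fun _ hk => Function.update_of_ne (ne_of_mem_of_not_mem hk hjA) _ _
    rw [hchi, hflip]
    ring
  · exact fun hx => by simpa using congrFun hx j

lemma sum_chiMon_mul_chiMon (S T : Finset (Fin n)) :
    ∑ x : Fin n → Bool, chiMon S x * chiMon T x = if S = T then 2 ^ n else 0 := by
  split_ifs with hST
  · simp [hST, chiMon_mul_self]
  rcases not_and_or.mp (mt (fun h => subset_antisymm h.1 h.2) hST) with hS | hT
  · simp_rw [mul_comm (chiMon S _)]
    exact sum_mul_chiMon_eq_zero (fun _ _ => chiMon_congr) hS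
  · exact sum_mul_chiMon_eq_zero (fun _ _ => chiMon_congr) hT

lemma sum_sets_chiMon_mul_chiMon (x y : Fin n → Bool) :
    ∑ T : Finset (Fin n), chiMon T x * chiMon T y = if x = y then 2 ^ n else 0 := by
  have hprod : ∑ T : Finset (Fin n), chiMon T x * chiMon T y
      = ∏ i, (1 + spin (x i) * spin (y i)) := by
    simp_rw [prod_one_add, powerset_univ, chiMon, prod_mul_distrib]
  rw [hprod]
  split_ifs with hxy
  · simp [hxy, spin_mul_self, one_add_one_eq_two]
  · obtain ⟨i, hi⟩ := Function.ne_iff.mp hxy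
    refine prod_eq_zero (mem_univ i) ?_
    revert hi; cases x i <;> cases y i <;> simp [spin]

def walshCoeff (h : (Fin n → Bool) → ℝ) (T : Finset (Fin n)) : ℝ :=
  (1 / 2 ^ n) * ∑ x, h x * chiMon T x

lemma walshCoeff_sub (a b : (Fin n → Bool) → ℝ) (T : Finset (Fin n)) :
    walshCoeff (fun x => a x - b x) T = walshCoeff a T - walshCoeff b T := by
  simp only [walshCoeff, sub_mul, sum_sub_distrib, mul_sub]

lemma walshCoeff_eq_zero {h : (Fin n → Bool) → ℝ} {A T : Finset (Fin n)}
    (hA : ∀ x y, (∀ k ∈ A, x k = y k) → h x = h y) (hT : ¬T ⊆ A) : walshCoeff h T = 0 := by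
  rw [walshCoeff, sum_mul_chiMon_eq_zero hA hT, mul_zero]

lemma sum_walshCoeff_mul_chiMon (h : (Fin n → Bool) → ℝ) (x : Fin n → Bool) :
    ∑ T, walshCoeff h T * chiMon T x = h x := by
  calc ∑ T, walshCoeff h T * chiMon T x
      = (1 / 2 ^ n) * ∑ y, h y * ∑ T : Finset (Fin n), chiMon T y * chiMon T x := by
        simp only [walshCoeff, mul_sum, sum_mul]
        rw [sum_comm]
        exact sum_congr rfl fun _ _ => sum_congr rfl fun _ _ => by ring
    _ = h x := by
        simp only [one_div, sum_sets_chiMon_mul_chiMon, mul_ite, mul_zero, sum_ite_eq', mem_univ,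
          if_true]
        field_simp

lemma sum_walshCoeff_sq (h : (Fin n → Bool) → ℝ) :
    ∑ T, walshCoeff h T ^ 2 = (1 / 2 ^ n) * ∑ x, h x ^ 2 := by
  calc ∑ T, walshCoeff h T ^ 2
      = (1 / 2 ^ n) * ∑ x, h x * ∑ T, walshCoeff h T * chiMon T x := by
        simp only [sq]
        conv_lhs => enter [2, T, 2]; rw [walshCoeff]
        simp only [mul_sum]
        rw [sum_comm]
        exact sum_congr rfl fun _ _ => sum_congr rfl fun _ _ => by ring
    _ = (1 / 2 ^ n) * ∑ x, h x ^ 2 := by simp only [sum_walshCoeff_mul_chiMon, sq]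

lemma sum_abs_walshCoeff_le {h : (Fin n → Bool) → ℝ} {M : Finset (Fin n)}
    (hM : ∀ x y, (∀ k ∈ M, x k = y k) → h x = h y) :
    ∑ T, |walshCoeff h T| ≤ 2 ^ ((#M : ℝ) / 2) * √((1 / 2 ^ n) * ∑ x, h x ^ 2) := by
  calc ∑ T, |walshCoeff h T|
      = ∑ T ∈ M.powerset, 1 * |walshCoeff h T| := by
        simp only [one_mul]
        refine (sum_subset (subset_univ _) fun T _ hT => ?_).symm
        rw [walshCoeff_eq_zero hM (by simpa using hT), abs_zero]
    _ ≤ √(∑ T ∈ M.powerset, 1 ^ 2) * √(∑ T ∈ M.powerset, |walshCoeff h T| ^ 2) :=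
        Real.sum_mul_le_sqrt_mul_sqrt _ _ _
    _ ≤ √(2 ^ #M) * √(∑ T, walshCoeff h T ^ 2) := by
        simp only [one_pow, sum_const, card_powerset, nsmul_one, Nat.cast_pow, Nat.cast_ofNat,
          sq_abs]
        gcongr
        exact subset_univ _
    _ = 2 ^ ((#M : ℝ) / 2) * √((1 / 2 ^ n) * ∑ x, h x ^ 2) := by
        rw [sum_walshCoeff_sq, sqrt_eq_rpow, ← rpow_natCast, ← rpow_mul zero_le_two]
        ring_nf

end Fourier

section LocalField

variable {n : ℕ}

def localField (w : Finset (Fin n) → ℝ) (i : Fin n) (x : Fin n → Bool) : ℝ :=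
  ∑ S ∈ univ.filter (i ∈ ·), w S * chiMon (S.erase i) x

lemma log_update_eq_add_localField {P : (Fin n → Bool) → ℝ} {w : Finset (Fin n) → ℝ}
    (hlog : ∀ x, Real.log (P x) = ∑ S, w S * chiMon S x) (i : Fin n) (x : Fin n → Bool)
    (b : Bool) :
    Real.log (P (Function.update x i b)) =
      ∑ S ∈ univ.filter (i ∉ ·), w S * chiMon S x + spin b * localField w i x := by
  rw [hlog, ← sum_filter_not_add_sum_filter univ (i ∈ ·), localField, mul_sum]
  congr 1
  · exact sum_congr rfl fun S hS => by rw [chiMon_update_of_notMem (mem_filter.mp hS).2]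
  · exact sum_congr rfl fun S hS => by rw [chiMon_update_of_mem (mem_filter.mp hS).2]; ring

lemma arctanh_sub_div_add {u v : ℝ} (hu : 0 < u) (hv : 0 < v) :
    arctanh ((u - v) / (u + v)) = (Real.log u - Real.log v) / 2 := by
  have hratio : (1 + (u - v) / (u + v)) / (1 - (u - v) / (u + v)) = u / v := by
    have huv : u + v ≠ 0 := by positivity
    rw [one_add_div huv, one_sub_div huv, div_div_div_cancel_right₀ huv]
    ring_nf
  rw [arctanh, hratio, Real.log_div hu.ne' hv.ne']
  ring

lemma arctanh_condMean {P : (Fin n → Bool) → ℝ} {w : Finset (Fin n) → ℝ}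
    (hpos : ∀ x, 0 < P x) (hlog : ∀ x, Real.log (P x) = ∑ S, w S * chiMon S x)
    (i : Fin n) (x : Fin n → Bool) : arctanh (condMean P i x) = localField w i x := by
  rw [condMean, arctanh_sub_div_add (hpos _) (hpos _), log_update_eq_add_localField hlog,
    log_update_eq_add_localField hlog]
  simp only [spin, if_true, Bool.false_eq_true, if_false]
  ring

lemma localField_congr {w : Finset (Fin n) → ℝ} {i : Fin n} {x y : Fin n → Bool}
    (h : ∀ k ∈ markovBlanket w i, x k = y k) : localField w i x = localField w i y := by
  refine sum_congr rfl fun S hS => ?_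
  rcases eq_or_ne (w S) 0 with hw | hw
  · simp [hw]
  refine congrArg _ (chiMon_congr fun k hk => h k ?_)
  exact mem_biUnion.mpr ⟨S, mem_filter.mpr ⟨mem_univ _, (mem_filter.mp hS).2, hw⟩, hk⟩

lemma walshCoeff_localField (w : Finset (Fin n) → ℝ) {i : Fin n} {T : Finset (Fin n)}
    (hi : i ∉ T) : walshCoeff (localField w i) T = w (insert i T) := by
  have herase : ∀ S ∈ univ.filter (i ∈ ·), S.erase i = T ↔ S = insert i T := fun S hS =>
    ⟨fun h => by rw [← h, insert_erase (mem_filter.mp hS).2], fun h => by rw [h, erase_insert hi]⟩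
  calc walshCoeff (localField w i) T
      = ∑ S ∈ univ.filter (i ∈ ·),
          w S * ((1 / 2 ^ n) * ∑ x, chiMon (S.erase i) x * chiMon T x) := by
        simp only [walshCoeff, localField, sum_mul, mul_sum]
        rw [sum_comm]
        exact sum_congr rfl fun _ _ => sum_congr rfl fun _ _ => by ring
    _ = ∑ S ∈ univ.filter (i ∈ ·), if S = insert i T then w S else 0 := by
        refine sum_congr rfl fun S hS => ?_
        simp only [sum_chiMon_mul_chiMon, herase S hS]
        split_ifs <;> simp
    _ = w (insert i T) := by simp

end LocalField

section CoefficientError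

variable {n : ℕ}

lemma abs_sub_mean_le_sum_abs_sub {ι : Type*} {s : Finset ι} (hs : s.Nonempty) (c : ℝ)
    (a : ι → ℝ) :
    |c - 1 / #s * ∑ i ∈ s, a i| ≤ ∑ i ∈ s, |c - a i| := by
  have hcard : (1 : ℝ) ≤ #s := by exact_mod_cast hs.card_pos
  have hmean : c - 1 / #s * ∑ i ∈ s, a i = 1 / #s * ∑ i ∈ s, (c - a i) := by
    rw [sum_sub_distrib, sum_const, nsmul_eq_mul]
    field_simp
  rw [hmean, abs_mul, abs_of_pos (by positivity)]
  calc 1 / #s * |∑ i ∈ s, (c - a i)| ≤ 1 / #s * ∑ i ∈ s, |c - a i| := by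
        gcongr
        exact abs_sum_le_sum_abs _ _
    _ ≤ ∑ i ∈ s, |c - a i| :=
        mul_le_of_le_one_left (sum_nonneg fun _ _ => abs_nonneg _)
          ((div_le_one (by positivity)).mpr hcard)

lemma sum_abs_sub_wHat_le (w : Finset (Fin n) → ℝ) (fhat : Fin n → (Fin n → Bool) → ℝ) :
    ∑ S ∈ univ.filter (fun S : Finset (Fin n) => S ≠ ∅), |w S - wHat fhat S| ≤
      ∑ i, ∑ S ∈ univ.filter (i ∈ ·), |w S - wHatSi fhat S i| := by
  calc ∑ S ∈ univ.filter (fun S : Finset (Fin n) => S ≠ ∅), |w S - wHat fhat S|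
      ≤ ∑ S ∈ univ.filter (fun S : Finset (Fin n) => S ≠ ∅), ∑ i ∈ S, |w S - wHatSi fhat S i| :=
        sum_le_sum fun S hS =>
          abs_sub_mean_le_sum_abs_sub (nonempty_iff_ne_empty.mpr (mem_filter.mp hS).2) _ _
    _ = ∑ i, ∑ S ∈ univ.filter (i ∈ ·), |w S - wHatSi fhat S i| :=
        sum_comm' fun S i => by
          simp only [mem_filter, mem_univ, true_and, and_true]
          exact ⟨And.right, fun hi => ⟨ne_empty_of_mem hi, hi⟩⟩

lemma sum_abs_sub_wHatSi_le {P : (Fin n → Bool) → ℝ} {w : Finset (Fin n) → ℝ}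
    (hpos : ∀ x, 0 < P x) (hlog : ∀ x, Real.log (P x) = ∑ S, w S * chiMon S x)
    {fhat : Fin n → (Fin n → Bool) → ℝ} {i : Fin n} {N : Finset (Fin n)}
    (hdep : ∀ x y : Fin n → Bool, (∀ k ∈ N, x k = y k) → fhat i x = fhat i y) :
    ∑ S ∈ univ.filter (i ∈ ·), |w S - wHatSi fhat S i| ≤
      2 ^ ((#(markovBlanket w i ∪ N) : ℝ) / 2 + 1) *
        √((1 / 2 ^ n) * ∑ x, (arctanh (fhat i x) - arctanh (condMean P i x)) ^ 2) := by
  set h : (Fin n → Bool) → ℝ := fun x => localField w i x - arctanh (fhat i x)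
  have hM : ∀ x y, (∀ k ∈ markovBlanket w i ∪ N, x k = y k) → h x = h y := fun x y hxy => by
    simp only [h, localField_congr fun k hk => hxy k (mem_union_left _ hk),
      hdep x y fun k hk => hxy k (mem_union_right _ hk)]
  have hcoeff : ∀ S ∈ univ.filter (i ∈ ·),
      |w S - wHatSi fhat S i| = |walshCoeff h (S.erase i)| := fun S hS => by
    rw [walshCoeff_sub, walshCoeff_localField w (notMem_erase i S),
      insert_erase (mem_filter.mp hS).2]
    rfl
  have herr : ∑ x, h x ^ 2 = ∑ x, (arctanh (fhat i x) - arctanh (condMean P i x)) ^ 2 :=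
    sum_congr rfl fun x _ => by rw [arctanh_condMean hpos hlog]; ring
  calc ∑ S ∈ univ.filter (i ∈ ·), |w S - wHatSi fhat S i|
      = ∑ T ∈ (univ.filter (i ∈ ·)).image (fun S : Finset (Fin n) => S.erase i),
          |walshCoeff h T| := by
        rw [sum_image (s := univ.filter (i ∈ ·)) fun S hS T hT hST =>
          erase_injOn' i (mem_filter.mp hS).2 (mem_filter.mp hT).2 hST]
        exact sum_congr rfl hcoeff
    _ ≤ ∑ T, |walshCoeff h T| :=
        sum_le_sum_of_subset_of_nonneg (subset_univ _) fun _ _ _ => abs_nonneg _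
    _ ≤ 2 ^ ((#(markovBlanket w i ∪ N) : ℝ) / 2) * √((1 / 2 ^ n) * ∑ x, h x ^ 2) :=
        sum_abs_walshCoeff_le hM
    _ ≤ _ := by
        rw [herr]
        gcongr
        · norm_num
        · linarith

end CoefficientError

section KullbackLeibler

variable {n : ℕ}

lemma klDiv_add_klDiv_eq {P Q : (Fin n → Bool) → ℝ} (hP : ∀ x, 0 < P x) (hQ : ∀ x, 0 < Q x) :
    klDiv Q P + klDiv P Q = ∑ x, (Q x - P x) * (Real.log (Q x) - Real.log (P x)) := by
  rw [klDiv, klDiv, ← sum_add_distrib]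
  refine sum_congr rfl fun x _ => ?_
  rw [Real.log_div (hQ x).ne' (hP x).ne', Real.log_div (hP x).ne' (hQ x).ne']
  ring

lemma abs_sum_sub_mul_chiMon_le {P Q : (Fin n → Bool) → ℝ} (hP : ∀ x, 0 ≤ P x)
    (hQ : ∀ x, 0 ≤ Q x) (hPsum : ∑ x, P x = 1) (hQsum : ∑ x, Q x = 1) (S : Finset (Fin n)) :
    |∑ x, (Q x - P x) * chiMon S x| ≤ 2 := by
  calc |∑ x, (Q x - P x) * chiMon S x| ≤ ∑ x, |(Q x - P x) * chiMon S x| :=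
        abs_sum_le_sum_abs _ _
    _ ≤ ∑ x, (Q x + P x) := sum_le_sum fun x _ => by
        rw [abs_mul, abs_chiMon, mul_one]
        exact (abs_sub _ _).trans_eq (by rw [abs_of_nonneg (hQ x), abs_of_nonneg (hP x)])
    _ = 2 := by rw [sum_add_distrib, hQsum, hPsum]; norm_num

lemma klDiv_add_klDiv_le {P Q : (Fin n → Bool) → ℝ} (hP : ∀ x, 0 < P x) (hQ : ∀ x, 0 < Q x)
    (hPsum : ∑ x, P x = 1) (hQsum : ∑ x, Q x = 1) {A : Finset (Finset (Fin n))} {c : ℝ}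
    {d : Finset (Fin n) → ℝ}
    (hlog : ∀ x, Real.log (Q x) - Real.log (P x) = c + ∑ S ∈ A, d S * chiMon S x) :
    klDiv Q P + klDiv P Q ≤ 2 * ∑ S ∈ A, |d S| := by
  calc klDiv Q P + klDiv P Q
      = c * ∑ x, (Q x - P x) + ∑ S ∈ A, d S * ∑ x, (Q x - P x) * chiMon S x := by
        simp only [klDiv_add_klDiv_eq hP hQ, hlog, mul_add, sum_add_distrib, mul_sum]
        rw [sum_comm (s := univ)]
        congr 1
        · exact sum_congr rfl fun _ _ => by ring
        · exact sum_congr rfl fun _ _ => sum_congr rfl fun _ _ => by ring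
    _ = ∑ S ∈ A, d S * ∑ x, (Q x - P x) * chiMon S x := by
        rw [sum_sub_distrib, hQsum, hPsum, sub_self, mul_zero, zero_add]
    _ ≤ ∑ S ∈ A, |d S| * 2 := sum_le_sum fun S _ => (le_abs_self _).trans <| by
        rw [abs_mul]
        gcongr
        exact abs_sum_sub_mul_chiMon_le (fun x => (hP x).le) (fun x => (hQ x).le) hPsum hQsum S
    _ = 2 * ∑ S ∈ A, |d S| := by rw [← sum_mul, mul_comm]

end KullbackLeibler

section Gibbs

variable {α : Type*} [Fintype α] [Nonempty α] (E : α → ℝ)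

lemma exp_div_sum_exp_pos (x : α) : 0 < exp (E x) / ∑ y, exp (E y) :=
  div_pos (exp_pos _) (sum_pos (fun _ _ => exp_pos _) univ_nonempty)

lemma sum_exp_div_sum_exp : ∑ x, exp (E x) / ∑ y, exp (E y) = 1 := by
  rw [← sum_div, div_self (sum_pos (fun _ _ => exp_pos _) univ_nonempty).ne']

lemma log_exp_div_sum_exp (x : α) :
    Real.log (exp (E x) / ∑ y, exp (E y)) = E x - Real.log (∑ y, exp (E y)) := by
  rw [Real.log_div (exp_ne_zero _) (sum_pos (fun _ _ => exp_pos _) univ_nonempty).ne',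
    Real.log_exp]

end Gibbs

theorem dist_from_predictors_general {n : ℕ}
    (P : (Fin n → Bool) → ℝ) (hpos : ∀ x, 0 < P x) (hsum : ∑ x : Fin n → Bool, P x = 1)
    (w : Finset (Fin n) → ℝ)
    (hlog : ∀ x, Real.log (P x) = ∑ S : Finset (Fin n), w S * chiMon S x)
    (fhat : Fin n → (Fin n → Bool) → ℝ)
    (Nhat : Fin n → Finset (Fin n))
    (hdep : ∀ i (x y : Fin n → Bool), (∀ k ∈ Nhat i, x k = y k) → fhat i x = fhat i y) :
    (∑ S ∈ Finset.univ.filter (fun S : Finset (Fin n) => S ≠ ∅),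
        |w S - wHat fhat S|) ≤
      (∑ i : Fin n,
        (2 : ℝ) ^ ((((markovBlanket w i ∪ Nhat i).card : ℝ)) / 2 + 1) *
          Real.sqrt ((1 / 2 ^ n) *
            ∑ x : Fin n → Bool,
              (arctanh (fhat i x) - arctanh (condMean P i x)) ^ 2)) ∧
    klDiv (pHat fhat) P + klDiv P (pHat fhat) ≤
      2 * ∑ S ∈ Finset.univ.filter (fun S : Finset (Fin n) => S ≠ ∅),
        |w S - wHat fhat S| := by
  set E : (Fin n → Bool) → ℝ := fun x => ∑ S ∈ univ.filter (· ≠ ∅), wHat fhat S * chiMon S x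
  constructor
  · exact (sum_abs_sub_wHat_le w fhat).trans <|
      sum_le_sum fun i _ => sum_abs_sub_wHatSi_le hpos hlog (hdep i)
  · have hlogP (x : Fin n → Bool) :
        Real.log (P x) = w ∅ + ∑ S ∈ univ.filter (· ≠ ∅), w S * chiMon S x := by
      rw [hlog, filter_ne', ← add_sum_erase _ _ (mem_univ ∅), chiMon, prod_empty, mul_one]
    have hlogQ (x : Fin n → Bool) : Real.log (pHat fhat x) - Real.log (P x) =
        (-Real.log (∑ y, exp (E y)) - w ∅) +
          ∑ S ∈ univ.filter (· ≠ ∅), (wHat fhat S - w S) * chiMon S x := by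
      rw [pHat, log_exp_div_sum_exp E, hlogP]
      simp only [E, sub_mul, sum_sub_distrib]
      ring
    refine (klDiv_add_klDiv_le hpos (exp_div_sum_exp_pos E) hsum (sum_exp_div_sum_exp E)
      hlogQ).trans_eq ?_
    simp_rw [abs_sub_comm]

/-- **Lemma (distribution learning from predictors).** Let `P` be a strictly positive
distribution on `{±1}ⁿ` with `log P(x) = ∑_S w_S x_S`, and for each `i` let
`f̂_i : {±1}ⁿ → (−1,1)` depend only on coordinates in `N̂(i) ⊆ [n] ∖ {i}`.  With
`ŵ_S` the averaged empirical Fourier coefficients, the total coefficient error is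
controlled by the prediction errors, and consequently the symmetrized KL divergence
between `P̂ ∝ exp(∑_{S≠∅} ŵ_S x_S)` and `P` is at most twice the coefficient error. -/
theorem dist_from_predictors {n : ℕ} (hn : 0 < n)
    (P : (Fin n → Bool) → ℝ) (hpos : ∀ x, 0 < P x) (hsum : ∑ x : Fin n → Bool, P x = 1)
    (w : Finset (Fin n) → ℝ)
    (hlog : ∀ x, Real.log (P x) = ∑ S : Finset (Fin n), w S * chiMon S x)
    (fhat : Fin n → (Fin n → Bool) → ℝ) (hfhat : ∀ i x, |fhat i x| < 1)
    (Nhat : Fin n → Finset (Fin n)) (hNhat : ∀ i, i ∉ Nhat i)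
    (hdep : ∀ i (x y : Fin n → Bool), (∀ k ∈ Nhat i, x k = y k) → fhat i x = fhat i y) :
    (∑ S ∈ Finset.univ.filter (fun S : Finset (Fin n) => S ≠ ∅),
        |w S - wHat fhat S|) ≤
      (∑ i : Fin n,
        (2 : ℝ) ^ ((((markovBlanket w i ∪ Nhat i).card : ℝ)) / 2 + 1) *
          Real.sqrt ((1 / 2 ^ n) *
            ∑ x : Fin n → Bool,
              (arctanh (fhat i x) - arctanh (condMean P i x)) ^ 2)) ∧
    klDiv (pHat fhat) P + klDiv P (pHat fhat) ≤
      2 * ∑ S ∈ Finset.univ.filter (fun S : Finset (Fin n) => S ≠ ∅),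
        |w S - wHat fhat S| :=
  dist_from_predictors_general P hpos hsum w hlog fhat Nhat hdep

end
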